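/- Let R be a 2-torsion free ring with unity and r ≥ 2 an integer. Let T : M_r(R) → M_r(R) be an additive mapping satisfying 2T(x²) = T(x)x + xT₀(x) for all x ∈ M_r(R), where T₀ : M_r(R) → M_r(R) is an additive mapping satisfying 2T₀(x²) = T₀(x)x + xT₀(x) for all x ∈ M_r(R). Then T = T₀, and T is a two-sided centralizer. -/

import Mathlib

/-!
Linearizing the identity for `T₀` at `y = 1` gives `2 T₀(x) = a x + x a` with `a = T₀(1)`, and
substituting this back yields `a x² + x² a = 2 x a x`. At an idempotent `e` this forces
`a e = e a e = e a`; since the idempotents of `M_r(R)`, `r ≥ 2`, generate it as a ring, `a` is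
central and `T₀(x) = a x`. Then `S(x) = T(x) - a x` satisfies `2 S(x²) = S(x) x`, so it kills
idempotents, hence off-diagonal matrix units `b e_ij = (e_ii + b e_ij) - e_ii`, and the
linearized identity against the `e_kl`, `k ≠ l`, kills the diagonal ones as well; so `T = T₀`.
-/

open Matrix

section Jordan

variable {S : Type*} [Ring S]

theorem two_nsmul_map_mul_add_mul {f g : S →+ S} (h : ∀ x, 2 • f (x ^ 2) = f x * x + x * g x)
    (x y : S) : 2 • f (x * y + y * x) = f x * y + f y * x + (x * g y + y * g x) := by
  have hxy := h (x + y)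
  rw [show (x + y) ^ 2 = x ^ 2 + (x * y + y * x) + y ^ 2 by noncomm_ring, map_add, map_add,
    smul_add, smul_add, h x, h y, map_add f x y, map_add g x y] at hxy
  calc 2 • f (x * y + y * x)
      = (f x + f y) * (x + y) + (x + y) * (g x + g y) - (f x * x + x * g x)
        - (f y * y + y * g y) := by rw [← hxy]; abel
    _ = f x * y + f y * x + (x * g y + y * g x) := by noncomm_ring

theorem two_nsmul_map_eq_map_one_mul_add {f : S →+ S}
    (h : ∀ x, 2 • f (x ^ 2) = f x * x + x * f x) (x : S) :
    2 • f x = f 1 * x + x * f 1 := by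
  have h1 := two_nsmul_map_mul_add_mul h x 1
  rw [mul_one, one_mul, ← two_nsmul, map_nsmul, mul_one, one_mul] at h1
  apply add_left_cancel (a := 2 • f x)
  rw [← two_nsmul, h1]
  abel

theorem map_one_mul_sq_add_sq_mul_map_one {f : S →+ S}
    (h : ∀ x, 2 • f (x ^ 2) = f x * x + x * f x) (x : S) :
    f 1 * x ^ 2 + x ^ 2 * f 1 = 2 • (x * f 1 * x) := by
  have hx := two_nsmul_map_eq_map_one_mul_add h
  apply add_left_cancel (a := f 1 * x ^ 2 + x ^ 2 * f 1)
  calc _ = 2 • (2 • f (x ^ 2)) := by rw [hx, two_nsmul]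
    _ = (2 • f x) * x + x * (2 • f x) := by rw [h, smul_add, smul_mul_assoc, mul_smul_comm]
    _ = _ := by rw [hx]; noncomm_ring

theorem IsIdempotentElem.commute_of_mul_add_mul_eq {a e : S} (he : IsIdempotentElem e)
    (h : a * e + e * a = 2 • (e * a * e)) : Commute a e := by
  have hl : e * a * e + e * a = e * a * e + e * a * e :=
    calc e * a * e + e * a = e * (a * e + e * a) := by rw [mul_add, ← mul_assoc, ← mul_assoc, he.eq]
      _ = e * a * e + e * a * e := by
        rw [h, mul_smul_comm, ← mul_assoc, ← mul_assoc, he.eq, two_nsmul]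
  have hr : a * e + e * a * e = e * a * e + e * a * e :=
    calc a * e + e * a * e = (a * e + e * a) * e := by rw [add_mul, mul_assoc a, he.eq]
      _ = e * a * e + e * a * e := by rw [h, smul_mul_assoc, mul_assoc _ e, he.eq, two_nsmul]
  exact (add_right_cancel hr).trans (add_left_cancel hl).symm

theorem map_eq_map_one_mul (htf : ∀ a : S, 2 • a = 0 → a = 0) {f : S →+ S}
    (h : ∀ x, 2 • f (x ^ 2) = f x * x + x * f x) (hc : ∀ x, Commute (f 1) x) (x : S) :
    f x = f 1 * x :=
  sub_eq_zero.1 <| htf _ <| by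
    rw [smul_sub, two_nsmul_map_eq_map_one_mul_add h, ← (hc x).eq, two_nsmul, sub_self]

theorem map_eq_zero_of_isIdempotentElem (htf : ∀ a : S, 2 • a = 0 → a = 0) {f : S →+ S}
    (h : ∀ x, 2 • f (x ^ 2) = f x * x) {e : S} (he : IsIdempotentElem e) : f e = 0 := by
  have he2 : 2 • f e = f e * e := by rw [← h, sq, he.eq]
  have hfe : f e * e = 0 := by
    have := congrArg (· * e) he2
    rw [smul_mul_assoc, mul_assoc, he.eq, two_nsmul] at this
    exact add_eq_right.1 this
  exact htf _ (he2.trans hfe)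

theorem two_nsmul_sub_mulLeft_sq {f g : S →+ S} {a : S}
    (h : ∀ x, 2 • f (x ^ 2) = f x * x + x * g x) (hg : ∀ x, g x = a * x)
    (ha : ∀ x, Commute a x) (x : S) :
    2 • (f - AddMonoidHom.mulLeft a) (x ^ 2) = (f - AddMonoidHom.mulLeft a) x * x := by
  simp only [AddMonoidHom.sub_apply, AddMonoidHom.coe_mulLeft, smul_sub, h, hg,
    ← mul_assoc, ← (ha x).eq]
  noncomm_ring

end Jordan

namespace Matrix

variable {n R : Type*} [Fintype n] [DecidableEq n] [Ring R]

theorem isIdempotentElem_single_one (i : n) : IsIdempotentElem (single i i (1 : R)) := by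
  simp [IsIdempotentElem]

theorem isIdempotentElem_single_one_add_single {i j : n} (hij : i ≠ j) (b : R) :
    IsIdempotentElem (single i i 1 + single i j b) := by
  simp [IsIdempotentElem, add_mul, mul_add, hij.symm]

theorem subring_closure_isIdempotentElem [Nontrivial n] :
    Subring.closure {e : Matrix n n R | IsIdempotentElem e} = ⊤ := by
  set C := Subring.closure {e : Matrix n n R | IsIdempotentElem e}
  have hoff : ∀ i j, i ≠ j → ∀ b : R, single i j b ∈ C := fun i j hij b => by
    simpa using C.sub_mem (Subring.subset_closure (isIdempotentElem_single_one_add_single hij b))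
      (Subring.subset_closure (isIdempotentElem_single_one (R := R) i))
  have hsingle : ∀ i j (b : R), single i j b ∈ C := fun i j b => by
    obtain rfl | hij := eq_or_ne i j
    · obtain ⟨k, hk⟩ := exists_ne i
      simpa using C.mul_mem (hoff i k hk.symm b) (hoff k i hk 1)
    · exact hoff i j hij b
  refine eq_top_iff.2 fun m _ => ?_
  rw [matrix_eq_sum_single m]
  exact C.sum_mem fun i _ => C.sum_mem fun j _ => hsingle i j _

theorem commute_of_forall_isIdempotentElem [Nontrivial n] {a : Matrix n n R}
    (h : ∀ e, IsIdempotentElem e → Commute a e) (m : Matrix n n R) : Commute a m := by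
  have hle : Subring.closure {e : Matrix n n R | IsIdempotentElem e} ≤ Subring.centralizer {a} :=
    Subring.closure_le.2 fun e he => Subring.mem_centralizer_iff.2 fun g hg => by
      rw [Set.mem_singleton_iff.1 hg]
      exact h e he
  rw [subring_closure_isIdempotentElem] at hle
  exact Subring.mem_centralizer_iff.1 (hle (Subring.mem_top m)) a rfl

theorem eq_zero_of_forall_mul_single_eq_zero [Nontrivial n] {m : Matrix n n R}
    (h : ∀ k l, k ≠ l → m * single k l 1 = 0) : m = 0 := by
  ext p k
  obtain ⟨l, hl⟩ := exists_ne k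
  simpa using congrFun (congrFun (h k l hl.symm) p) l

theorem addMonoidHom_eq_zero_of_two_nsmul_map_sq [Nontrivial n]
    (htf : ∀ a : Matrix n n R, 2 • a = 0 → a = 0) {f : Matrix n n R →+ Matrix n n R}
    (h : ∀ x, 2 • f (x ^ 2) = f x * x) : f = 0 := by
  have hoff : ∀ i j, i ≠ j → ∀ b : R, f (single i j b) = 0 := fun i j hij b => by
    have := map_sub f (single i i 1 + single i j b) (single i i 1)
    rwa [add_sub_cancel_left,
      map_eq_zero_of_isIdempotentElem htf h (isIdempotentElem_single_one_add_single hij b),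
      map_eq_zero_of_isIdempotentElem htf h (isIdempotentElem_single_one i), sub_zero] at this
  have hdiag : ∀ i (b : R), f (single i i b) = 0 := fun i b => by
    refine eq_zero_of_forall_mul_single_eq_zero fun k l hkl => ?_
    have hlin := two_nsmul_map_mul_add_mul (g := 0) (by simpa using h) (single i i b) (single k l 1)
    have hoff' : f (single i i b * single k l 1 + single k l 1 * single i i b) = 0 := by
      obtain rfl | hik := eq_or_ne i k <;> obtain rfl | hli := eq_or_ne l i
      · exact absurd rfl hkl
      · simp [hli, hoff i l hli.symm]
      · simp [hik, hoff k l hkl]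
      · simp [hik, hli]
    simpa [hoff', hoff k l hkl] using hlin.symm
  refine ext_addMonoidHom fun i j => AddMonoidHom.ext fun b => ?_
  obtain rfl | hij := eq_or_ne i j
  · simpa using hdiag i b
  · simpa using hoff i j hij b

end Matrix

theorem vukman_identity_matrix_pair {R : Type*} [Ring R]
    (htf : ∀ a : R, 2 • a = 0 → a = 0)
    (r : ℕ) (hr : 2 ≤ r)
    (T T₀ : Matrix (Fin r) (Fin r) R → Matrix (Fin r) (Fin r) R)
    (haddT : ∀ x y, T (x + y) = T x + T y)
    (haddT₀ : ∀ x y, T₀ (x + y) = T₀ x + T₀ y)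
    (h : ∀ x, 2 • T (x ^ 2) = T x * x + x * T₀ x)
    (h₀ : ∀ x, 2 • T₀ (x ^ 2) = T₀ x * x + x * T₀ x) :
    T = T₀ ∧ ∀ x y, T (x * y) = T x * y ∧ T (x * y) = x * T y := by
  have : Nontrivial (Fin r) := Fin.nontrivial_iff_two_le.2 hr
  let F := AddMonoidHom.mk' T haddT
  let F₀ := AddMonoidHom.mk' T₀ haddT₀
  have htfM : ∀ m : Matrix (Fin r) (Fin r) R, 2 • m = 0 → m = 0 := fun m hm =>
    ext fun i j => htf _ (by simpa using congrFun (congrFun hm i) j)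
  have hcomm : ∀ x, Commute (T₀ 1) x := commute_of_forall_isIdempotentElem fun e he =>
    he.commute_of_mul_add_mul_eq <| by
      have := map_one_mul_sq_add_sq_mul_map_one (f := F₀) h₀ e
      rwa [he.pow_eq two_ne_zero] at this
  have hT₀ : ∀ x, T₀ x = T₀ 1 * x := map_eq_map_one_mul htfM (f := F₀) h₀ hcomm
  have hT : ∀ x, T x = T₀ 1 * x := fun x => sub_eq_zero.1 <| DFunLike.congr_fun
    (addMonoidHom_eq_zero_of_two_nsmul_map_sq htfM
      (two_nsmul_sub_mulLeft_sq (f := F) (g := F₀) h hT₀ hcomm)) x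
  refine ⟨funext fun x => (hT x).trans (hT₀ x).symm, fun x y => ⟨?_, ?_⟩⟩
  · rw [hT, hT, mul_assoc]
  · rw [hT, hT, ← mul_assoc x, ← (hcomm x).eq, mul_assoc]
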